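/- Let r ≥ 1, let F be the free group on r generators x₁,…,x_r, F' its derived subgroup, F'' its second derived subgroup, and M_r = F/F'' the free metabelian group of rank r with generators x̄₁,…,x̄_r. Then every element of the image of F' in M_r is a product of 2^{r−1}·r·(r+1)·(2r+3) + 3r + 1 palindromes over {x̄₁,…,x̄_r}. -/

import Mathlib

/-- A palindromic word over `X`: a finite list of elements of `X ∪ X⁻¹`
that reads the same forwards and backwards. -/
def IsPalindromicWord {G : Type*} [Group G] (X : Set G) (w : List G) : Prop :=
  (∀ g ∈ w, g ∈ X ∨ g⁻¹ ∈ X) ∧ w.reverse = w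

/-- `g` is a product (in order) of the evaluations of `n` palindromic words over `X`. -/
def IsProdOfPalindromes {G : Type*} [Group G] (X : Set G) (n : ℕ) (g : G) : Prop :=
  ∃ ws : List (List G), ws.length = n ∧ (∀ w ∈ ws, IsPalindromicWord X w) ∧
    (ws.map List.prod).prod = g


/-- The second derived subgroup `F''` of a group. -/
def secondDerived (F : Type*) [Group F] : Subgroup F :=
  ⁅commutator F, commutator F⁆

instance secondDerived_normal (F : Type*) [Group F] : (secondDerived F).Normal := by
  unfold secondDerived; infer_instance

/-- The free metabelian group of rank `r`. -/
abbrev FreeMetabelian (r : ℕ) := FreeGroup (Fin r) ⧸ secondDerived (FreeGroup (Fin r))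

/-!
Let `G` be metabelian, generated by `x₁, …, x_r`, so that `A = G'` is abelian. Each
`a ↦ ⁅a, xᵢ⁆` is an endomorphism of `A`; the product `D` of their images is normal in `G`, and `A`
commutes with every `xᵢ` modulo `D`, so `D = ⁅A, G⁆` and its elements are products of `r`
commutators `⁅a, xᵢ⁆`. In `G / ⁅A, G⁆` all commutators are central, so there the image of `A` is
generated by the `⁅xᵢ, xⱼ⁆`, and `⁅xᵢ, xⱼ⁆ⁿ = ⁅xᵢⁿ, xⱼ⁆`; this gives `r²` more commutators.
Finally, if `a` is the value of a word `w`, then `⁅a, y⁆ = (w y wʳ) (w wʳ)⁻¹ y⁻¹` is a product of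
three palindromes, and `3 (r + r²)` is within the stated bound.
-/

open scoped commutatorElement Pointwise

section Palindromes

variable {G : Type*} [Group G] {X : Set G}

theorem exists_list_prod_eq_of_mem_closure {a : G} (ha : a ∈ Subgroup.closure X) :
    ∃ w : List G, (∀ g ∈ w, g ∈ X ∨ g⁻¹ ∈ X) ∧ w.prod = a := by
  obtain ⟨w, hw, rfl⟩ := Submonoid.exists_list_of_mem_closure (s := X ∪ X⁻¹)
    (by rw [← Subgroup.closure_toSubmonoid]; exact ha)
  exact ⟨w, hw, rfl⟩

theorem IsPalindromicWord.append_append_reverse {w p : List G}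
    (hw : ∀ g ∈ w, g ∈ X ∨ g⁻¹ ∈ X) (hp : IsPalindromicWord X p) :
    IsPalindromicWord X (w ++ p ++ w.reverse) := by
  refine ⟨fun g hg => ?_, by simp [hp.2]⟩
  simp only [List.mem_append, List.mem_reverse] at hg
  rcases hg with (hg | hg) | hg
  exacts [hw g hg, hp.1 g hg, hw g hg]

theorem isPalindromicWord_singleton {y : G} (hy : y ∈ X) : IsPalindromicWord X [y] :=
  ⟨by simpa using Or.inl hy, rfl⟩

theorem isPalindromicWord_nil : IsPalindromicWord X ([] : List G) :=
  ⟨by simp, rfl⟩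

theorem IsPalindromicWord.map_inv {p : List G} (hp : IsPalindromicWord X p) :
    IsPalindromicWord X (p.map (·⁻¹)) := by
  refine ⟨fun g hg => ?_, by rw [← List.map_reverse, hp.2]⟩
  obtain ⟨h, hh, rfl⟩ := List.mem_map.mp hg
  simpa [or_comm] using hp.1 h hh

theorem IsPalindromicWord.prod_map_inv {p : List G} (hp : IsPalindromicWord X p) :
    (p.map (·⁻¹)).prod = p.prod⁻¹ := by
  rw [List.prod_inv_reverse, ← List.map_reverse, hp.2]

theorem IsPalindromicWord.isProdOfPalindromes {p : List G} (hp : IsPalindromicWord X p) :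
    IsProdOfPalindromes X 1 p.prod :=
  ⟨[p], rfl, by simpa using hp, by simp⟩

theorem IsPalindromicWord.isProdOfPalindromes_inv {p : List G} (hp : IsPalindromicWord X p) :
    IsProdOfPalindromes X 1 p.prod⁻¹ :=
  hp.prod_map_inv ▸ hp.map_inv.isProdOfPalindromes

theorem isProdOfPalindromes_one (n : ℕ) : IsProdOfPalindromes X n 1 :=
  ⟨List.replicate n [], List.length_replicate,
    fun _ hw => List.eq_of_mem_replicate hw ▸ isPalindromicWord_nil, by simp⟩

theorem IsProdOfPalindromes.mul {m n : ℕ} {g h : G} (hg : IsProdOfPalindromes X m g)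
    (hh : IsProdOfPalindromes X n h) : IsProdOfPalindromes X (m + n) (g * h) := by
  obtain ⟨us, rfl, hus, rfl⟩ := hg
  obtain ⟨vs, rfl, hvs, rfl⟩ := hh
  refine ⟨us ++ vs, List.length_append, fun w hw => ?_, by simp⟩
  rcases List.mem_append.mp hw with hw | hw
  exacts [hus w hw, hvs w hw]

theorem IsProdOfPalindromes.mono {m n : ℕ} (hmn : m ≤ n) {g : G}
    (hg : IsProdOfPalindromes X m g) : IsProdOfPalindromes X n g := by
  obtain ⟨k, rfl⟩ := Nat.exists_eq_add_of_le hmn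
  simpa using hg.mul (isProdOfPalindromes_one k)

theorem isProdOfPalindromes_of_mem_pow {S : Set G} {k : ℕ}
    (hS : ∀ g ∈ S, IsProdOfPalindromes X k g) :
    ∀ n, ∀ g ∈ S ^ n, IsProdOfPalindromes X (k * n) g
  | 0, g, hg => by rw [pow_zero, Set.mem_one] at hg; exact hg ▸ isProdOfPalindromes_one 0
  | n + 1, _, hgh => by
    obtain ⟨g, hg, h, hh, rfl⟩ := Set.mem_mul.mp (pow_succ S n ▸ hgh)
    exact (isProdOfPalindromes_of_mem_pow hS n g hg).mul (hS h hh)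

theorem isProdOfPalindromes_commutatorElement {a y : G} (ha : a ∈ Subgroup.closure X)
    (hy : y ∈ X) : IsProdOfPalindromes X 3 ⁅a, y⁆ := by
  obtain ⟨w, hw, rfl⟩ := exists_list_prod_eq_of_mem_closure ha
  have h := (((isPalindromicWord_singleton hy).append_append_reverse hw).isProdOfPalindromes.mul
    (isPalindromicWord_nil.append_append_reverse hw).isProdOfPalindromes_inv).mul
    (isPalindromicWord_singleton hy).isProdOfPalindromes_inv
  convert h using 1
  simp only [List.prod_append, List.prod_singleton, List.prod_nil, commutatorElement_def]
  group

end Palindromes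

section GeneratedGroups

variable {G N : Type*} [Group G] [Group N] {ι : Type*}

theorem commutatorElement_mem_commutator (u v : G) : ⁅u, v⁆ ∈ commutator G :=
  Subgroup.commutator_mem_commutator (Subgroup.mem_top u) (Subgroup.mem_top v)

theorem map_commutator_of_surjective {f : G →* N} (hf : Function.Surjective f) :
    (commutator G).map f = commutator N := by
  rw [map_commutator_eq, MonoidHom.range_eq_top_of_surjective f hf]
  rfl

theorem closure_range_comp_eq_top {f : G →* N} (hf : Function.Surjective f) {x : ι → G}
    (hx : Subgroup.closure (Set.range x) = ⊤) : Subgroup.closure (Set.range (f ∘ x)) = ⊤ := by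
  rw [Set.range_comp, ← MonoidHom.map_closure, hx, Subgroup.map_top_of_surjective f hf]

theorem mem_center_iff_of_closure_eq_top {s : Set G} (hs : Subgroup.closure s = ⊤) {z : G} :
    z ∈ Subgroup.center G ↔ ∀ g ∈ s, g * z = z * g := by
  rw [← Subgroup.centralizer_univ, ← Subgroup.coe_top, ← hs, Subgroup.centralizer_closure,
    Subgroup.mem_centralizer_iff]

theorem isMulCommutative_of_closure_eq_top {s : Set G} (hs : Subgroup.closure s = ⊤)
    (hcomm : ∀ g ∈ s, ∀ h ∈ s, g * h = h * g) : IsMulCommutative G := by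
  have hcenter : ⊤ ≤ Subgroup.center G := hs ▸ Subgroup.closure_le _ |>.mpr fun h hh =>
    (mem_center_iff_of_closure_eq_top hs).mpr fun g hg => hcomm g hg h hh
  exact ⟨⟨fun g h => Subgroup.mem_center_iff.mp (hcenter (Subgroup.mem_top h)) g⟩⟩

theorem commutatorElement_mem_iff_mul_comm_mk {N : Subgroup G} [N.Normal] {a g : G} :
    ⁅a, g⁆ ∈ N ↔ (a : G ⧸ N) * g = g * a := by
  rw [← QuotientGroup.eq_one_iff, ← QuotientGroup.mk'_apply, map_commutatorElement,
    commutatorElement_eq_one_iff_mul_comm]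
  rfl

variable (G) in
theorem commutator_quotient_commutator_commutator_top_le_center :
    commutator (G ⧸ ⁅commutator G, (⊤ : Subgroup G)⁆) ≤
      Subgroup.center (G ⧸ ⁅commutator G, (⊤ : Subgroup G)⁆) := by
  rw [← map_commutator_of_surjective (QuotientGroup.mk'_surjective _)]
  rintro _ ⟨a, ha, rfl⟩
  refine Subgroup.mem_center_iff.mpr fun q => ?_
  obtain ⟨g, rfl⟩ := QuotientGroup.mk'_surjective _ q
  exact (commutatorElement_mem_iff_mul_comm_mk.mp
    (Subgroup.commutator_mem_commutator ha (Subgroup.mem_top g))).symm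

open scoped IsMulCommutative in
theorem coe_prod_mem_pow {H : Subgroup G} [IsMulCommutative H] {S : Set G} {κ : Type*}
    [Fintype κ] {f : κ → H} (hf : ∀ k, (f k : G) ∈ S) :
    ((∏ k, f k : H) : G) ∈ S ^ Fintype.card κ := by
  have hprod : ∏ k, f k ∈ ((↑) ⁻¹' S : Set H) ^ Fintype.card κ := by
    simpa using
      Set.finsetProd_mem_finsetProd Finset.univ (fun _ => ((↑) : H → G) ⁻¹' S) f fun k _ => hf k
  have himage := Set.mem_image_of_mem H.subtype hprod
  rw [Set.image_pow] at himage
  exact Set.pow_subset_pow_left (Set.image_preimage_subset _ _) himage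

end GeneratedGroups

section CentralCommutators

variable {Q : Type*} [Group Q] (hQ : commutator Q ≤ Subgroup.center Q)
include hQ

def commutatorElementCenterHom (v : Q) : Q →* Subgroup.center Q :=
  MonoidHom.mk' (fun u => ⟨⁅u, v⁆, hQ (commutatorElement_mem_commutator u v)⟩) fun u w => by
    have hc := Subgroup.mem_center_iff.mp (hQ (commutatorElement_mem_commutator w v))
    ext
    calc ⁅u * w, v⁆ = u * ⁅w, v⁆ * u⁻¹ * ⁅u, v⁆ := by simp only [commutatorElement_def]; group
      _ = ⁅w, v⁆ * ⁅u, v⁆ := by rw [hc u]; group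
      _ = ⁅u, v⁆ * ⁅w, v⁆ := (hc _).symm

theorem commutatorElement_zpow_left_of_le_center (u v : Q) (n : ℤ) :
    ⁅u ^ n, v⁆ = ⁅u, v⁆ ^ n :=
  congrArg Subtype.val (map_zpow (commutatorElementCenterHom hQ v) u n)

theorem commutator_le_closure_commutatorElement_of_le_center {ι : Type*} {y : ι → Q}
    (hy : Subgroup.closure (Set.range y) = ⊤) :
    commutator Q ≤ Subgroup.closure (Set.range fun p : ι × ι => ⁅y p.1, y p.2⁆) := by
  set C := Subgroup.closure (Set.range fun p : ι × ι => ⁅y p.1, y p.2⁆)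
  have hC : C ≤ Subgroup.center Q := Subgroup.closure_le _ |>.mpr <|
    Set.range_subset_iff.mpr fun p => hQ (commutatorElement_mem_commutator _ _)
  have : C.Normal := ⟨fun c hc g => by
    rwa [Subgroup.mem_center_iff.mp (hC hc) g, mul_inv_cancel_right]⟩
  rw [← Subgroup.Normal.quotient_commutative_iff_commutator_le]
  refine isMulCommutative_of_closure_eq_top
    (closure_range_comp_eq_top (QuotientGroup.mk'_surjective C) hy) ?_
  rintro _ ⟨i, rfl⟩ _ ⟨j, rfl⟩
  rw [← commutatorElement_eq_one_iff_mul_comm, Function.comp_apply, Function.comp_apply,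
    ← map_commutatorElement, QuotientGroup.mk'_apply, QuotientGroup.eq_one_iff]
  exact Subgroup.subset_closure ⟨(i, j), rfl⟩

end CentralCommutators

section Metabelian

open scoped IsMulCommutative

variable {G : Type*} [Group G] [IsMulCommutative (commutator G)]

theorem commutatorElement_mul_left_of_mem {a : G} (ha : a ∈ commutator G) (b y : G) :
    ⁅a * b, y⁆ = ⁅a, y⁆ * ⁅b, y⁆ := by
  have hby := commutatorElement_mem_commutator b y
  calc ⁅a * b, y⁆ = a * ⁅b, y⁆ * a⁻¹ * ⁅a, y⁆ := by simp only [commutatorElement_def]; group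
    _ = ⁅b, y⁆ * ⁅a, y⁆ := by rw [setLike_mul_comm ha hby]; group
    _ = ⁅a, y⁆ * ⁅b, y⁆ := setLike_mul_comm hby (commutatorElement_mem_commutator a y)

def commutatorElementDerivedHom (y : G) : commutator G →* commutator G :=
  MonoidHom.mk' (fun a => ⟨⁅(a : G), y⁆, commutatorElement_mem_commutator _ _⟩) fun a b =>
    Subtype.ext (commutatorElement_mul_left_of_mem a.2 b y)

/-- `h y h⁻¹ = ⁅h, y⁆ y`, and `⁅h, y⁆` lies in the abelian group `G'`. -/
theorem conj_commutatorElement_of_mem (h : G) {a : G} (ha : a ∈ commutator G) (y : G) :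
    h * ⁅a, y⁆ * h⁻¹ = ⁅h * a * h⁻¹, y⁆ := by
  set a' := h * a * h⁻¹
  have ha' : a' ∈ commutator G := Subgroup.Normal.conj_mem inferInstance a ha h
  have hc := commutatorElement_mem_commutator h y
  calc h * ⁅a, y⁆ * h⁻¹ = ⁅a', ⁅h, y⁆ * y⁆ := by simp only [a', commutatorElement_def]; group
    _ = ⁅h, y⁆ * ⁅a', y⁆ * ⁅h, y⁆⁻¹ := by
      rw [commutatorElement_def a', ← mul_assoc, setLike_mul_comm ha' hc, commutatorElement_def a']
      group
    _ = ⁅a', y⁆ := by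
      rw [setLike_mul_comm hc (commutatorElement_mem_commutator a' y), mul_inv_cancel_right]

theorem conjNormal_commutatorElementDerivedHom (h y : G) (a : commutator G) :
    MulAut.conjNormal h (commutatorElementDerivedHom y a) =
      commutatorElementDerivedHom y (MulAut.conjNormal h a) :=
  Subtype.ext (conj_commutatorElement_of_mem h a.2 y)

variable {ι : Type*} [Fintype ι]

def commutatorProdHom (x : ι → G) : (ι → commutator G) →* commutator G :=
  ∏ i, (commutatorElementDerivedHom (x i)).comp (Pi.evalMonoidHom _ i)

theorem commutatorProdHom_apply (x : ι → G) (b : ι → commutator G) :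
    commutatorProdHom x b = ∏ i, commutatorElementDerivedHom (x i) (b i) :=
  MonoidHom.finsetProd_apply _ _ _

theorem commutatorElement_mem_range_commutatorProdHom (x : ι → G) (a : commutator G) (i : ι) :
    commutatorElementDerivedHom (x i) a ∈ (commutatorProdHom x).range := by
  classical
  refine ⟨Pi.mulSingle i a, ?_⟩
  rw [commutatorProdHom_apply, Finset.prod_eq_single i (fun j _ hj => by simp [hj]) (by simp)]
  simp

instance normal_map_range_commutatorProdHom (x : ι → G) :
    ((commutatorProdHom x).range.map (commutator G).subtype).Normal := by
  refine ⟨?_⟩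
  rintro _ ⟨_, ⟨b, rfl⟩, rfl⟩ h
  refine ⟨_, ⟨fun i => MulAut.conjNormal h (b i), rfl⟩, ?_⟩
  simp only [Subgroup.coe_subtype, commutatorProdHom_apply,
    ← conjNormal_commutatorElementDerivedHom, ← map_prod, MulAut.conjNormal_apply]

theorem commutator_commutator_top_le_map_range {x : ι → G}
    (hx : Subgroup.closure (Set.range x) = ⊤) :
    ⁅commutator G, (⊤ : Subgroup G)⁆ ≤ (commutatorProdHom x).range.map (commutator G).subtype := by
  set R := (commutatorProdHom x).range.map (commutator G).subtype
  rw [Subgroup.commutator_le]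
  intro a ha g _
  have hcentral : (a : G ⧸ R) ∈ Subgroup.center (G ⧸ R) := by
    refine (mem_center_iff_of_closure_eq_top
      (closure_range_comp_eq_top (QuotientGroup.mk'_surjective R) hx)).mpr ?_
    rintro _ ⟨i, rfl⟩
    have hmem : ⁅a, x i⁆ ∈ R :=
      ⟨_, commutatorElement_mem_range_commutatorProdHom x ⟨a, ha⟩ i, rfl⟩
    exact (commutatorElement_mem_iff_mul_comm_mk.mp hmem).symm
  exact commutatorElement_mem_iff_mul_comm_mk.mpr (Subgroup.mem_center_iff.mp hcentral g).symm

theorem commutator_commutator_top_subset_pow {x : ι → G}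
    (hx : Subgroup.closure (Set.range x) = ⊤) :
    ((⁅commutator G, ⊤⁆ : Subgroup G) : Set G) ⊆
      {h | ∃ (a : G) (i : ι), ⁅a, x i⁆ = h} ^ Fintype.card ι := by
  intro d hd
  obtain ⟨_, ⟨b, rfl⟩, rfl⟩ := commutator_commutator_top_le_map_range hx hd
  rw [Subgroup.coe_subtype, commutatorProdHom_apply]
  exact coe_prod_mem_pow fun i => ⟨b i, i, rfl⟩

theorem exists_mem_pow_mul_inv_mem_commutator_commutator_top {x : ι → G}
    (hx : Subgroup.closure (Set.range x) = ⊤) {g : G} (hg : g ∈ commutator G) :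
    ∃ w ∈ {h | ∃ (a : G) (i : ι), ⁅a, x i⁆ = h} ^ (Fintype.card ι * Fintype.card ι),
      g * w⁻¹ ∈ ⁅commutator G, (⊤ : Subgroup G)⁆ := by
  set N := ⁅commutator G, (⊤ : Subgroup G)⁆
  have hQ := commutator_quotient_commutator_commutator_top_le_center G
  set π := (QuotientGroup.mk' N).comp (commutator G).subtype
  let c : ι × ι → commutator G := fun p => ⟨⁅x p.1, x p.2⁆, commutatorElement_mem_commutator _ _⟩
  have hclosure : (g : G ⧸ N) ∈ (Subgroup.closure (Set.range c)).map π := by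
    rw [MonoidHom.map_closure, ← Set.range_comp]
    refine commutator_le_closure_commutatorElement_of_le_center hQ
      (closure_range_comp_eq_top (QuotientGroup.mk'_surjective N) hx) ?_
    rw [← map_commutator_of_surjective (QuotientGroup.mk'_surjective N)]
    exact Subgroup.mem_map_of_mem _ hg
  obtain ⟨_, hz, hzg⟩ := hclosure
  obtain ⟨n, rfl⟩ := Subgroup.exists_of_mem_closure_range c _ hz
  let w : ι × ι → commutator G :=
    fun p => ⟨⁅x p.1 ^ n p, x p.2⁆, commutatorElement_mem_commutator _ _⟩
  have hwc : ∏ p, w p * (c p ^ n p)⁻¹ ∈ π.ker := Subgroup.prod_mem _ fun p _ => by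
    rw [MonoidHom.mem_ker, map_mul, map_inv, mul_inv_eq_one]
    show QuotientGroup.mk' N ⁅x p.1 ^ n p, x p.2⁆ = QuotientGroup.mk' N (⁅x p.1, x p.2⁆ ^ n p)
    rw [map_zpow, map_commutatorElement, map_commutatorElement, map_zpow,
      commutatorElement_zpow_left_of_le_center hQ]
  rw [Finset.prod_mul_distrib, Finset.prod_inv_distrib, MonoidHom.mem_ker, map_mul, map_inv,
    mul_inv_eq_one, hzg] at hwc
  refine ⟨↑(∏ p, w p), ?_, ?_⟩
  · simpa using coe_prod_mem_pow (S := {h | ∃ (a : G) (i : ι), ⁅a, x i⁆ = h})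
      fun p => ⟨x p.1 ^ n p, p.2, rfl⟩
  rw [← QuotientGroup.eq_one_iff, QuotientGroup.mk_mul, QuotientGroup.mk_inv, mul_inv_eq_one]
  exact hwc.symm

theorem commutator_subset_pow_commutatorElement {x : ι → G}
    (hx : Subgroup.closure (Set.range x) = ⊤) :
    (commutator G : Set G) ⊆ {h | ∃ (a : G) (i : ι), ⁅a, x i⁆ = h} ^
      (Fintype.card ι + Fintype.card ι * Fintype.card ι) := by
  intro g hg
  obtain ⟨w, hw, hgw⟩ := exists_mem_pow_mul_inv_mem_commutator_commutator_top hx hg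
  rw [pow_add]
  simpa using Set.mul_mem_mul (commutator_commutator_top_subset_pow hx hgw) hw

end Metabelian

instance isMulCommutative_commutator_quotient_secondDerived (F : Type*) [Group F] :
    IsMulCommutative (commutator (F ⧸ secondDerived F)) := by
  rw [← map_commutator_of_surjective (QuotientGroup.mk'_surjective _)]
  refine ⟨⟨?_⟩⟩
  rintro ⟨_, a, ha, rfl⟩ ⟨_, b, hb, rfl⟩
  exact Subtype.ext <| commutatorElement_mem_iff_mul_comm_mk.mp <|
    Subgroup.commutator_mem_commutator ha hb

theorem free_metabelian_derived_palindromic_width_general (r : ℕ) :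
    ∀ g ∈ (commutator (FreeGroup (Fin r))).map
        (QuotientGroup.mk' (secondDerived (FreeGroup (Fin r)))),
      IsProdOfPalindromes
        {x : FreeMetabelian r | ∃ i : Fin r, x = QuotientGroup.mk (FreeGroup.of i)}
        (2 ^ (r - 1) * r * (r + 1) * (2 * r + 3) + 3 * r + 1) g := by
  intro g hg
  set x : Fin r → FreeMetabelian r := QuotientGroup.mk' _ ∘ FreeGroup.of
  have hx : Subgroup.closure (Set.range x) = ⊤ :=
    closure_range_comp_eq_top (QuotientGroup.mk'_surjective _) (FreeGroup.closure_range_of _)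
  have hX : {y : FreeMetabelian r | ∃ i : Fin r, y = QuotientGroup.mk (FreeGroup.of i)} =
      Set.range x :=
    Set.ext fun _ => exists_congr fun _ => eq_comm
  rw [map_commutator_of_surjective (QuotientGroup.mk'_surjective _)] at hg
  have hbound : 3 * (r + r * r) ≤ 2 ^ (r - 1) * r * (r + 1) * (2 * r + 3) + 3 * r + 1 :=
    calc 3 * (r + r * r) ≤ (2 * r + 3) * (r * (r + 1)) := by nlinarith
      _ ≤ 2 ^ (r - 1) * ((2 * r + 3) * (r * (r + 1))) := Nat.le_mul_of_pos_left _ (by positivity)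
      _ = 2 ^ (r - 1) * r * (r + 1) * (2 * r + 3) := by ring
      _ ≤ _ := by linarith
  rw [hX]
  refine (isProdOfPalindromes_of_mem_pow (fun c hc => ?_) _ g
    (commutator_subset_pow_commutatorElement hx hg)).mono (by simpa using hbound)
  obtain ⟨a, i, rfl⟩ := hc
  exact isProdOfPalindromes_commutatorElement (hx ▸ Subgroup.mem_top a) ⟨i, rfl⟩

theorem free_metabelian_derived_palindromic_width (r : ℕ) (hr : 1 ≤ r) :
    ∀ g ∈ (commutator (FreeGroup (Fin r))).map
        (QuotientGroup.mk' (secondDerived (FreeGroup (Fin r)))),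
      IsProdOfPalindromes
        {x : FreeMetabelian r | ∃ i : Fin r, x = QuotientGroup.mk (FreeGroup.of i)}
        (2 ^ (r - 1) * r * (r + 1) * (2 * r + 3) + 3 * r + 1) g :=
  free_metabelian_derived_palindromic_width_general r
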